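/- Let X = X₁ × ⋯ × Xₙ and Y = Y₁ × ⋯ × Yₙ be products of finite types, and let P_Π(X) and P_Π(Y) be the sets of product measures on X and Y respectively. (1) If f is a faithful X-Y product embedding, then P_Π(X) and P_Π(Y) correspond under f, and consequently the relative-entropy inference procedure based on product priors is invariant under f: for all KB, θ ⊆ Δ_X, P_Π(X)|KB ⊆ θ iff P_Π(Y)|f*(KB) ⊆ f*(θ). (2) The same conclusions hold when f is the permutation embedding induced by a permutation π of {1, …, n} (with Y = X_{π(1)} × ⋯ × X_{π(n)}). -/

import Mathlib

/-- A probability measure (probability mass function) on a finite type. -/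
structure PM (X : Type) [Fintype X] where
  pm : X → ℝ
  nonneg : ∀ x, 0 ≤ pm x
  total : ∑ x, pm x = 1

namespace PM

variable {X Y : Type} [Fintype X] [Fintype Y]

/-- The probability of a set `S`: `μ(S) = ∑_{x ∈ S} μ(x)`. -/
noncomputable def prob (μ : PM X) (S : Set X) : ℝ := ∑ x, S.indicator μ.pm x

lemma prob_nonneg (μ : PM X) (S : Set X) : 0 ≤ μ.prob S :=
  Finset.sum_nonneg fun x _ => Set.indicator_apply_nonneg fun _ => μ.nonneg x

/-- Marginal on the first component: `μ_X(A) = μ(A × Y)`. -/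
noncomputable def margFst (μ : PM (X × Y)) : PM X where
  pm x := ∑ y, μ.pm (x, y)
  nonneg x := Finset.sum_nonneg fun y _ => μ.nonneg (x, y)
  total := by rw [← μ.total, ← Fintype.sum_prod_type]

/-- Marginal on the second component: `μ_Y(B) = μ(X × B)`. -/
noncomputable def margSnd (μ : PM (X × Y)) : PM Y where
  pm y := ∑ x, μ.pm (x, y)
  nonneg y := Finset.sum_nonneg fun x _ => μ.nonneg (x, y)
  total := by rw [← μ.total, ← Fintype.sum_prod_type_right]

/-- Conditioning `μ|S`; the junk value `μ` is returned when `μ(S) = 0`. -/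
noncomputable def cond (μ : PM X) (S : Set X) : PM X :=
  if h : 0 < μ.prob S then
    { pm := fun x => S.indicator μ.pm x / μ.prob S
      nonneg := fun x =>
        div_nonneg (Set.indicator_apply_nonneg fun _ => μ.nonneg x) (le_of_lt h)
      total := by
        rw [← Finset.sum_div]
        exact div_self (ne_of_gt h) }
  else μ

end PM

open PM

/-- An `X`-inference procedure: a partial map on sets of probability measures. -/
structure InfProc (X : Type) [Fintype X] where
  dom : Set (Set (PM X))
  map : Set (PM X) → Set (PM X)
  map_subset : ∀ A ∈ dom, map A ⊆ A
  map_empty_iff : ∀ A ∈ dom, (map A = ∅ ↔ A = ∅)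

/-- `KB ⊢_I θ`. -/
def Infers {X : Type} [Fintype X] (I : InfProc X) (KB θ : Set (PM X)) : Prop :=
  I.map KB ⊆ θ

section Lift

variable {X Y : Type} [Fintype X] [Fintype Y]

/-- A constraint on `Δ_X` viewed as a constraint on `Δ_{X×Y}`: `KB↑`. -/
def liftKB (Y : Type) [Fintype Y] (KB : Set (PM X)) : Set (PM (X × Y)) :=
  {μ | margFst μ ∈ KB}

/-- `proj_X(B) = {μ_X : μ ∈ B}`. -/
def projFst (B : Set (PM (X × Y))) : Set (PM X) := margFst '' B

/-- `ψ ⊆ Δ_{X×Y}` is `X`-conservative over `KB ⊆ Δ_X`. -/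
def Conservative (KB : Set (PM X)) (ψ : Set (PM (X × Y))) : Prop :=
  projFst (liftKB Y KB ∩ ψ) = KB

end Lift

/-- Robustness of a finitary inference procedure. -/
def Robust (I : ∀ (X : Type) [Fintype X], InfProc X) : Prop :=
  ∀ (X Y : Type) [Fintype X] [Fintype Y], ∀ KB φ : Set (PM X),
    KB ∈ (I X).dom → ∀ ψ : Set (PM (X × Y)), Conservative KB ψ →
      (Infers (I X) KB φ ↔ Infers (I (X × Y)) (liftKB Y KB ∩ ψ) (liftKB Y φ))

/-- An inference procedure is essentially entailment. -/
def EssEntail {X : Type} [Fintype X] (I : InfProc X) : Prop :=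
  ∀ KB ∈ I.dom, ∀ (S : Set X) (α β : ℝ),
    Infers I KB {μ | α < μ.prob S ∧ μ.prob S < β} →
    KB ⊆ {μ | α ≤ μ.prob S ∧ μ.prob S ≤ β}

def DI1 (I : ∀ (X : Type) [Fintype X], InfProc X) : Prop :=
  ∀ (X : Type) [Fintype X], ∀ (S : Set X) (α β : ℝ), α ≤ β →
    {μ : PM X | α ≤ μ.prob S ∧ μ.prob S ≤ β} ∈ (I X).dom

def DI2 (I : ∀ (X : Type) [Fintype X], InfProc X) : Prop :=
  ∀ (X Y : Type) [Fintype X] [Fintype Y], ∀ KB : Set (PM X),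
    KB ∈ (I X).dom → liftKB Y KB ∈ (I (X × Y)).dom

def DI3 (I : ∀ (X : Type) [Fintype X], InfProc X) : Prop :=
  ∀ (X : Type) [Fintype X], ∀ KB₁ KB₂ : Set (PM X),
    KB₁ ∈ (I X).dom → KB₂ ∈ (I X).dom → KB₁ ∩ KB₂ ∈ (I X).dom

/-- An `X`-`Y` embedding: a homomorphism of set algebras. -/
structure Emb (X Y : Type) where
  f : Set X → Set Y
  map_union : ∀ S T, f (S ∪ T) = f S ∪ f T
  map_compl : ∀ S, f Sᶜ = (f S)ᶜ

/-- A faithful embedding. -/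
def Emb.Faithful {X Y : Type} (e : Emb X Y) : Prop :=
  ∀ S T : Set X, S ⊆ T ↔ e.f S ⊆ e.f T

section Embeddings

variable {X Y : Type} [Fintype X] [Fintype Y]

/-- `μ` and `ν` correspond under `f`. -/
def Corr (e : Emb X Y) (μ : PM X) (ν : PM Y) : Prop :=
  ∀ S : Set X, μ.prob S = ν.prob (e.f S)

/-- `f*(D)`, the union over `μ ∈ D` of the measures corresponding to `μ`. -/
def fstar (e : Emb X Y) (D : Set (PM X)) : Set (PM Y) :=
  {ν | ∃ μ ∈ D, Corr e μ ν}

/-- Sets of measures `D_X` and `D_Y` correspond under `f`. -/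
def SetCorr (e : Emb X Y) (DX : Set (PM X)) (DY : Set (PM Y)) : Prop :=
  (∀ ν ∈ DY, ∃ μ ∈ DX, Corr e μ ν) ∧ (∀ μ ∈ DX, ∃ ν ∈ DY, Corr e μ ν)

end Embeddings

/-- Representation independence of a finitary inference procedure. -/
def RepInd (I : ∀ (X : Type) [Fintype X], InfProc X) : Prop :=
  ∀ (X Y : Type) [Fintype X] [Fintype Y] (e : Emb X Y), e.Faithful →
    (∀ KB : Set (PM X), KB ∈ (I X).dom ↔ fstar e KB ∈ (I Y).dom) ∧
    (∀ KB : Set (PM X), KB ∈ (I X).dom → ∀ θ : Set (PM X),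
      (Infers (I X) KB θ ↔ Infers (I Y) (fstar e KB) (fstar e θ)))

def DI4 (I : ∀ (X : Type) [Fintype X], InfProc X) : Prop :=
  ∀ (X Y : Type) [Fintype X] [Fintype Y] (e : Emb X Y), e.Faithful →
    ∀ KB : Set (PM X), (KB ∈ (I X).dom ↔ fstar e KB ∈ (I Y).dom)

/-- `A ⇔ B` for sets of measures. -/
def iffSet {α : Type*} (A B : Set α) : Set α := (A ∩ B) ∪ (Aᶜ ∩ Bᶜ)

def DI5 (I : ∀ (X : Type) [Fintype X], InfProc X) : Prop :=
  ∀ (X Y : Type) [Fintype X] [Fintype Y] (KB : Set (PM (X × Y))) (e : Emb X Y),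
    e.Faithful → KB ∈ (I (X × Y)).dom → ∀ φ₁ : Set (PM X),
      KB ∩ iffSet (liftKB Y φ₁) {μ | margSnd μ ∈ fstar e φ₁} ∈ (I (X × Y)).dom

/-- Minimal default independence. -/
def MDI (I : ∀ (X : Type) [Fintype X], InfProc X) : Prop :=
  ∀ (X Y : Type) [Fintype X] [Fintype Y], ∀ KB : Set (PM X), ∀ (S : Set X) (T : Set Y),
    liftKB Y KB ∈ (I (X × Y)).dom →
    Infers (I (X × Y)) (liftKB Y KB)
      {μ | μ.prob (S ×ˢ T) = μ.prob (S ×ˢ (Set.univ : Set Y)) * μ.prob ((Set.univ : Set X) ×ˢ T)}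

/-- `KB` depends only on `S₁, …, S_k`. -/
def DependsOnly {X : Type} [Fintype X] {k : ℕ} (KB : Set (PM X)) (S : Fin k → Set X) : Prop :=
  ∀ μ μ' : PM X, (∀ i, μ.prob (S i) = μ'.prob (S i)) → (μ ∈ KB ↔ μ' ∈ KB)

/-- An atom over `S₁, …, S_k`. -/
def Atom {X : Type} {k : ℕ} (S : Fin k → Set X) (c : Fin k → Bool) : Set X :=
  ⋂ i, (if c i then S i else (S i)ᶜ)

section KL

variable {X : Type} [Fintype X]

/-- Absolute continuity of pmfs. -/
def AbsCont (μ' μ : PM X) : Prop := ∀ x, μ.pm x = 0 → μ'.pm x = 0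

/-- Relative entropy `D(μ'‖μ) ∈ [0,∞]` (it is `⊤` unless `μ' ≪ μ`). -/
noncomputable def KL (μ' μ : PM X) : EReal := by
  classical
  exact if AbsCont μ' μ then
    ((∑ x, μ'.pm x * Real.log (μ'.pm x / μ.pm x) : ℝ) : EReal)
  else ⊤

/-- The relative-entropy projection `μ|θ`. -/
def klProj (μ : PM X) (θ : Set (PM X)) : Set (PM X) :=
  {μ' | μ' ∈ θ ∧ KL μ' μ ≠ ⊤ ∧ ∀ μ'' ∈ θ, KL μ' μ ≤ KL μ'' μ}

/-- `D|θ = ⋃_{μ ∈ D} μ|θ`. -/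
def DProj (D : Set (PM X)) (θ : Set (PM X)) : Set (PM X) :=
  ⋃ μ ∈ D, klProj μ θ

end KL

section Products

variable {n : ℕ} {X : Fin n → Type} [∀ i, Fintype (X i)]

/-- The `i`-th marginal of a measure on a finite product. -/
noncomputable def margPi (μ : PM (∀ i, X i)) (i : Fin n) : PM (X i) where
  pm a := μ.prob {x | x i = a}
  nonneg a := PM.prob_nonneg _ _
  total := by
    classical
    unfold PM.prob
    rw [Finset.sum_comm]
    have h : ∀ x : (∀ i, X i),
        (∑ a, ({y : ∀ j, X j | y i = a}).indicator μ.pm x) = μ.pm x := by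
      intro x
      simp [Set.indicator_apply]
    simp only [h]
    exact μ.total

/-- `μ` is a product measure on `X₁ × ⋯ × Xₙ`. -/
def IsProdPM (μ : PM (∀ i, X i)) : Prop :=
  ∃ μi : ∀ i, PM (X i), ∀ U : ∀ i, Set (X i),
    μ.prob {x | ∀ i, x i ∈ U i} = ∏ i, (μi i).prob (U i)

end Products

/-- The set `P_Π(X)` of product measures. -/
def PPi {n : ℕ} (X : Fin n → Type) [∀ i, Fintype (X i)] : Set (PM (∀ i, X i)) :=
  {μ | IsProdPM μ}

/-- `e` is a product embedding. -/
def IsProdEmb {n : ℕ} {X Y : Fin n → Type} (e : Emb (∀ i, X i) (∀ i, Y i)) : Prop :=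
  ∃ ei : ∀ i, Emb (X i) (Y i), ∀ S : Set (∀ i, X i),
    e.f S = ⋃ x ∈ S, {y | ∀ i, y i ∈ (ei i).f {x i}}

/-! Both kinds of embedding are preimage maps `S ↦ g ⁻¹' S` of a point map `g : Y → X`; for a
product embedding `g` acts coordinatewise, because the images of the atoms `{x}` partition `Y`.
So `ν` corresponds to `μ` exactly when `g` pushes `ν` forward to `μ`, and push-forward along `g`
maps the product measures on `Y` onto those on `X`. Relative entropy can only decrease under
push-forward (log-sum inequality), and the bound is attained by the lift of `μ'` that agrees
with `ν` on every fibre of `g`. Hence push-forward maps `ν|f*(θ)` onto `(g_* ν)|θ`, which gives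
the invariance of the inference procedure. -/

namespace PM

variable {X A B : Type} [Fintype X] [Fintype A] [Fintype B]

@[ext]
lemma ext {μ ν : PM X} (h : μ.pm = ν.pm) : μ = ν := by
  cases μ; cases ν; cases h; rfl

lemma nonempty (μ : PM X) : Nonempty X := by
  by_contra h
  have := μ.total
  simp_all [not_nonempty_iff.mp h]

lemma prob_singleton (μ : PM X) (x : X) : μ.prob {x} = μ.pm x := by
  classical
  simp [prob, Set.indicator_apply]

lemma ext_prob {μ ν : PM X} (h : ∀ S, μ.prob S = ν.prob S) : μ = ν :=
  ext (funext fun x => by rw [← prob_singleton, ← prob_singleton, h])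

noncomputable def push (g : B → A) (ν : PM B) : PM A where
  pm a := ν.prob (g ⁻¹' {a})
  nonneg a := ν.prob_nonneg _
  total := by
    classical
    simp only [prob, Set.indicator_apply, Set.mem_preimage, Set.mem_singleton_iff]
    rw [Finset.sum_comm]
    simp [ν.total]

lemma push_pm (g : B → A) (ν : PM B) (a : A) [DecidableEq A] :
    (push g ν).pm a = ∑ b with g b = a, ν.pm b := by
  show ν.prob (g ⁻¹' {a}) = _
  rw [PM.prob, Finset.sum_filter]
  refine Finset.sum_congr rfl fun b _ => ?_
  by_cases h : g b = a <;> simp [h]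

lemma sum_push_pm_mul (g : B → A) (ν : PM B) (F : A → ℝ) :
    ∑ a, (push g ν).pm a * F a = ∑ b, ν.pm b * F (g b) := by
  classical
  rw [← Finset.sum_fiberwise Finset.univ g]
  refine Finset.sum_congr rfl fun a _ => ?_
  rw [push_pm, Finset.sum_mul]
  exact Finset.sum_congr rfl fun b hb => by rw [(Finset.mem_filter.mp hb).2]

lemma push_prob (g : B → A) (ν : PM B) (S : Set A) :
    (push g ν).prob S = ν.prob (g ⁻¹' S) := by
  classical
  simpa [prob, Set.indicator_apply] using sum_push_pm_mul g ν fun a => if a ∈ S then 1 else 0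

end PM

lemma sum_mul_log_div_sum_le {ι : Type*} (s : Finset ι) (a b : ι → ℝ)
    (ha : ∀ i ∈ s, 0 ≤ a i) (hb : ∀ i ∈ s, 0 ≤ b i) (hab : ∀ i ∈ s, b i = 0 → a i = 0) :
    (∑ i ∈ s, a i) * Real.log ((∑ i ∈ s, a i) / ∑ i ∈ s, b i) ≤
      ∑ i ∈ s, a i * Real.log (a i / b i) := by
  set B := ∑ i ∈ s, b i
  rcases (Finset.sum_nonneg hb).eq_or_lt with hB | hB
  · have ha0 : ∀ i ∈ s, a i = 0 := fun i hi =>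
      hab i hi ((Finset.sum_eq_zero_iff_of_nonneg hb).mp hB.symm i hi)
    rw [Finset.sum_eq_zero ha0, Finset.sum_eq_zero fun i hi => by rw [ha0 i hi, zero_mul],
      zero_mul]
  have hw : ∀ i ∈ s, b i / B * (a i / b i) = a i / B := by
    intro i hi
    rcases (hb i hi).eq_or_lt with h | h
    · simp [← h, hab i hi h.symm]
    · field_simp
  have hJ := Real.convexOn_mul_log.map_sum_le (t := s) (w := fun i => b i / B)
    (p := fun i => a i / b i) (fun i hi => div_nonneg (hb i hi) hB.le)
    (by rw [← Finset.sum_div, div_self hB.ne'])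
    (fun i hi => Set.mem_Ici.mpr (div_nonneg (ha i hi) (hb i hi)))
  have hR : ∑ i ∈ s, b i / B * (a i / b i * Real.log (a i / b i)) =
      (∑ i ∈ s, a i * Real.log (a i / b i)) / B := by
    rw [Finset.sum_div]
    exact Finset.sum_congr rfl fun i hi => by
      rw [← mul_assoc, hw i hi, div_mul_eq_mul_div]
  simp only [smul_eq_mul, Finset.sum_congr rfl hw, ← Finset.sum_div] at hJ
  rw [hR, div_mul_eq_mul_div, div_le_div_iff_of_pos_right hB] at hJ
  exact hJ

open PM

section RelativeEntropy

variable {X A B : Type} [Fintype X] [Fintype A] [Fintype B]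

noncomputable def klReal (μ' μ : PM X) : ℝ :=
  ∑ x, μ'.pm x * Real.log (μ'.pm x / μ.pm x)

lemma KL_of_absCont {μ' μ : PM X} (h : AbsCont μ' μ) : KL μ' μ = klReal μ' μ := by
  simp [KL, h, klReal]

lemma KL_of_not_absCont {μ' μ : PM X} (h : ¬AbsCont μ' μ) : KL μ' μ = ⊤ := by
  simp [KL, h]

lemma KL_ne_top_iff {μ' μ : PM X} : KL μ' μ ≠ ⊤ ↔ AbsCont μ' μ := by
  by_cases h : AbsCont μ' μ
  · simp [KL_of_absCont h, h]
  · simp [KL_of_not_absCont h, h]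

variable (g : B → A)

lemma AbsCont.push {ν' ν : PM B} (h : AbsCont ν' ν) : AbsCont (push g ν') (push g ν) := by
  classical
  intro a ha
  rw [push_pm] at ha ⊢
  have hν := (Finset.sum_eq_zero_iff_of_nonneg fun b _ => ν.nonneg b).mp ha
  exact Finset.sum_eq_zero fun b hb => h b (hν b hb)

lemma klReal_push_le {ν' ν : PM B} (h : AbsCont ν' ν) :
    klReal (push g ν') (push g ν) ≤ klReal ν' ν := by
  classical
  rw [klReal, klReal, ← Finset.sum_fiberwise Finset.univ g]
  refine Finset.sum_le_sum fun a _ => ?_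
  rw [push_pm, push_pm]
  exact sum_mul_log_div_sum_le _ _ _ (fun b _ => ν'.nonneg b) (fun b _ => ν.nonneg b)
    fun b _ => h b

lemma KL_push_le (ν' ν : PM B) : KL (push g ν') (push g ν) ≤ KL ν' ν := by
  by_cases h : AbsCont ν' ν
  · rw [KL_of_absCont h, KL_of_absCont (h.push g)]
    exact_mod_cast klReal_push_le g h
  · rw [KL_of_not_absCont h]
    exact le_top

lemma push_pm_mul_div {ν : PM B} {μ : PM A} (h : AbsCont μ (push g ν)) (a : A) :
    (push g ν).pm a * (μ.pm a / (push g ν).pm a) = μ.pm a :=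
  mul_div_cancel_of_imp' (h a)

noncomputable def condLift (ν : PM B) (μ : PM A) (h : AbsCont μ (push g ν)) : PM B where
  pm b := ν.pm b * (μ.pm (g b) / (push g ν).pm (g b))
  nonneg b := mul_nonneg (ν.nonneg b) (div_nonneg (μ.nonneg _) ((push g ν).nonneg _))
  total := by
    rw [← sum_push_pm_mul g ν fun a => μ.pm a / (push g ν).pm a]
    simp only [push_pm_mul_div g h, μ.total]

variable {g}

lemma push_condLift {ν : PM B} {μ : PM A} (h : AbsCont μ (push g ν)) :
    push g (condLift g ν μ h) = μ := by
  classical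
  ext a
  calc (push g (condLift g ν μ h)).pm a
      = ∑ b with g b = a, ν.pm b * (μ.pm a / (push g ν).pm a) := by
        rw [push_pm]
        exact Finset.sum_congr rfl fun b hb => by rw [← (Finset.mem_filter.mp hb).2]; rfl
    _ = (push g ν).pm a * (μ.pm a / (push g ν).pm a) := by
        rw [← Finset.sum_mul]
        exact congrArg (· * _) (push_pm g ν a).symm
    _ = μ.pm a := push_pm_mul_div g h a

lemma KL_condLift {ν : PM B} {μ : PM A} (h : AbsCont μ (push g ν)) :
    KL (condLift g ν μ h) ν = KL μ (push g ν) := by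
  have hac : AbsCont (condLift g ν μ h) ν := fun b hb => by simp [condLift, hb]
  rw [KL_of_absCont hac, KL_of_absCont h]
  congr 1
  set r := fun a => μ.pm a / (push g ν).pm a
  have hterm : ∀ b, (condLift g ν μ h).pm b * Real.log ((condLift g ν μ h).pm b / ν.pm b) =
      ν.pm b * (r (g b) * Real.log (r (g b))) := by
    intro b
    show ν.pm b * r (g b) * Real.log (ν.pm b * r (g b) / ν.pm b) = _
    rcases (ν.nonneg b).eq_or_lt with h0 | h0
    · simp [← h0]
    · rw [mul_div_cancel_left₀ _ h0.ne', mul_assoc]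
  rw [klReal, Finset.sum_congr rfl fun b _ => hterm b,
    ← sum_push_pm_mul g ν fun a => r a * Real.log (r a), klReal]
  exact Finset.sum_congr rfl fun a _ => by rw [← mul_assoc, push_pm_mul_div g h]

lemma push_mem_klProj {ν ν' : PM B} {θ : Set (PM A)} (hν' : ν' ∈ klProj ν (push g ⁻¹' θ)) :
    push g ν' ∈ klProj (push g ν) θ := by
  obtain ⟨hmem, hfin, hmin⟩ := hν'
  refine ⟨hmem, ne_top_of_le_ne_top hfin (KL_push_le g ν' ν), fun μ hμ => ?_⟩
  by_cases hac : AbsCont μ (push g ν)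
  · calc KL (push g ν') (push g ν) ≤ KL ν' ν := KL_push_le g ν' ν
      _ ≤ KL (condLift g ν μ hac) ν := hmin _ (by rwa [Set.mem_preimage, push_condLift])
      _ = KL μ (push g ν) := KL_condLift hac
  · rw [KL_of_not_absCont hac]
    exact le_top

lemma exists_push_eq_of_mem_klProj {ν : PM B} {μ' : PM A} {θ : Set (PM A)}
    (hμ' : μ' ∈ klProj (push g ν) θ) : ∃ ν' ∈ klProj ν (push g ⁻¹' θ), push g ν' = μ' := by
  obtain ⟨hmem, hfin, hmin⟩ := hμ'
  have hac := KL_ne_top_iff.mp hfin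
  refine ⟨condLift g ν μ' hac, ⟨?_, ?_, fun ν'' hν'' => ?_⟩, push_condLift hac⟩
  · rwa [Set.mem_preimage, push_condLift]
  · rwa [KL_condLift]
  · calc KL (condLift g ν μ' hac) ν = KL μ' (push g ν) := KL_condLift hac
      _ ≤ KL (push g ν'') (push g ν) := hmin _ hν''
      _ ≤ KL ν'' ν := KL_push_le g ν'' ν

lemma image_push_klProj (ν : PM B) (θ : Set (PM A)) :
    push g '' klProj ν (push g ⁻¹' θ) = klProj (push g ν) θ := by
  ext μ'
  constructor
  · rintro ⟨ν', hν', rfl⟩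
    exact push_mem_klProj hν'
  · exact exists_push_eq_of_mem_klProj

lemma image_push_DProj (D : Set (PM B)) (θ : Set (PM A)) :
    push g '' DProj D (push g ⁻¹' θ) = DProj (push g '' D) θ := by
  simp only [DProj, Set.image_iUnion₂, image_push_klProj, Set.biUnion_image]

end RelativeEntropy

namespace Emb

variable {A B : Type}

lemma map_univ (d : Emb A B) : d.f Set.univ = Set.univ := by
  have h := d.map_union ∅ ∅ᶜ
  rwa [d.map_compl, Set.union_compl_self, Set.union_compl_self] at h

lemma map_empty (d : Emb A B) : d.f ∅ = ∅ := by
  simpa [map_univ] using d.map_compl Set.univ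

lemma map_inter (d : Emb A B) (S T : Set A) : d.f (S ∩ T) = d.f S ∩ d.f T := by
  rw [← compl_compl (S ∩ T), Set.compl_inter, d.map_compl, d.map_union, d.map_compl,
    d.map_compl, Set.compl_union, compl_compl, compl_compl]

lemma map_eq_biUnion [Finite A] (d : Emb A B) (S : Set A) : d.f S = ⋃ a ∈ S, d.f {a} := by
  induction S, S.toFinite using Set.Finite.induction_on with
  | empty => simp [map_empty]
  | @insert a S _ _ ih => rw [Set.biUnion_insert, ← ih, ← d.map_union, Set.insert_eq]

lemma exists_preimage_eq [Finite A] (d : Emb A B) : ∃ g : B → A, ∀ S, d.f S = g ⁻¹' S := by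
  have hcover : ∀ b, ∃ a, b ∈ d.f {a} := fun b => by
    have hb := Set.mem_univ b
    rw [← d.map_univ, map_eq_biUnion] at hb
    simpa using hb
  choose g hg using hcover
  refine ⟨g, fun S => ?_⟩
  ext b
  rw [map_eq_biUnion, Set.mem_iUnion₂, Set.mem_preimage]
  constructor
  · rintro ⟨a, ha, hb⟩
    by_contra hne
    have hdisj : b ∈ d.f ({g b} ∩ {a}) := by rw [map_inter]; exact ⟨hg b, hb⟩
    have hempty : ({g b} : Set A) ∩ {a} = ∅ :=
      Set.singleton_inter_eq_empty.mpr fun h : g b ∈ ({a} : Set A) => hne (h ▸ ha)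
    rwa [hempty, map_empty] at hdisj
  · exact fun h => ⟨g b, h, hg b⟩

lemma Faithful.surjective {e : Emb A B} (he : e.Faithful) {g : B → A}
    (hg : ∀ S, e.f S = g ⁻¹' S) : Function.Surjective g := by
  intro a
  by_contra! h
  have hsub : e.f {a} ⊆ e.f ∅ := by
    rw [hg, hg]
    exact fun b hb => h b hb
  exact (he {a} ∅).mpr hsub rfl

end Emb

section Correspondence

variable {A B : Type} [Fintype A] [Fintype B] {e : Emb A B} {g : B → A}

lemma corr_iff_push_eq (hg : ∀ S, e.f S = g ⁻¹' S) (μ : PM A) (ν : PM B) :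
    Corr e μ ν ↔ push g ν = μ := by
  constructor
  · exact fun h => ext_prob fun S => by rw [push_prob, ← hg, h]
  · rintro rfl S
    rw [push_prob, hg]

lemma fstar_eq_preimage (hg : ∀ S, e.f S = g ⁻¹' S) (D : Set (PM A)) :
    fstar e D = push g ⁻¹' D := by
  ext ν
  rw [Set.mem_preimage]
  exact ⟨fun ⟨μ, hμ, h⟩ => (corr_iff_push_eq hg μ ν).mp h ▸ hμ,
    fun h => ⟨_, h, (corr_iff_push_eq hg _ ν).mpr rfl⟩⟩

theorem setCorr_and_DProj_subset_iff (hg : ∀ S, e.f S = g ⁻¹' S) {PA : Set (PM A)}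
    {PB : Set (PM B)} (himage : push g '' PB = PA) :
    SetCorr e PA PB ∧
      ∀ KB θ : Set (PM A), (DProj PA KB ⊆ θ ↔ DProj PB (fstar e KB) ⊆ fstar e θ) := by
  subst himage
  refine ⟨⟨fun ν hν => ⟨push g ν, ⟨ν, hν, rfl⟩, (corr_iff_push_eq hg _ _).mpr rfl⟩, ?_⟩,
    fun KB θ => ?_⟩
  · rintro _ ⟨ν, hν, rfl⟩
    exact ⟨ν, hν, (corr_iff_push_eq hg _ _).mpr rfl⟩
  · rw [fstar_eq_preimage hg, fstar_eq_preimage hg, ← Set.image_subset_iff, image_push_DProj]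

end Correspondence

lemma Function.Surjective.of_piMap {ι : Type*} {α β : ι → Type*} [∀ i, Nonempty (β i)]
    {f : ∀ i, α i → β i} (h : Function.Surjective (Pi.map f)) (i : ι) :
    Function.Surjective (f i) := by
  classical
  intro b
  obtain ⟨x, hx⟩ := h (Function.update (fun j => Classical.arbitrary (β j)) i b)
  exact ⟨x i, by simpa using congrFun hx i⟩

section ProductMeasures

variable {n : ℕ} {X Y : Fin n → Type} [∀ i, Fintype (X i)] [∀ i, Fintype (Y i)]

noncomputable def prodPM (μi : ∀ i, PM (X i)) : PM (∀ i, X i) where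
  pm x := ∏ i, (μi i).pm (x i)
  nonneg x := Finset.prod_nonneg fun i _ => (μi i).nonneg _
  total := by simp [← Fintype.piFinset_univ, ← Finset.prod_univ_sum, PM.total]

lemma prodPM_prob_box (μi : ∀ i, PM (X i)) (U : ∀ i, Set (X i)) :
    (prodPM μi).prob {x | ∀ i, x i ∈ U i} = ∏ i, (μi i).prob (U i) := by
  classical
  simp only [PM.prob, Set.indicator_apply, Finset.prod_univ_sum, Fintype.piFinset_univ,
    Finset.prod_ite_zero, Finset.mem_univ, true_implies]
  rfl

lemma prodPM_mem_PPi (μi : ∀ i, PM (X i)) : prodPM μi ∈ PPi X :=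
  ⟨μi, prodPM_prob_box μi⟩

lemma PM.ext_box {μ ν : PM (∀ i, X i)}
    (h : ∀ U : ∀ i, Set (X i), μ.prob {x | ∀ i, x i ∈ U i} = ν.prob {x | ∀ i, x i ∈ U i}) :
    μ = ν := by
  have hbox : ∀ x : ∀ i, X i, ({x} : Set _) = {y | ∀ i, y i ∈ ({x i} : Set (X i))} := fun x => by
    ext y
    simp [funext_iff]
  exact PM.ext (funext fun x => by rw [← prob_singleton, ← prob_singleton, hbox, h])

lemma prob_box_push_piMap (g : ∀ i, Y i → X i) {ν : PM (∀ i, Y i)} {νi : ∀ i, PM (Y i)}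
    (hν : ∀ V : ∀ i, Set (Y i), ν.prob {y | ∀ i, y i ∈ V i} = ∏ i, (νi i).prob (V i))
    (U : ∀ i, Set (X i)) :
    (push (Pi.map g) ν).prob {x | ∀ i, x i ∈ U i} = ∏ i, (push (g i) (νi i)).prob (U i) := by
  simp only [push_prob]
  exact hν fun i => g i ⁻¹' U i

lemma image_push_piMap_PPi (g : ∀ i, Y i → X i) (hg : Function.Surjective (Pi.map g)) :
    push (Pi.map g) '' PPi Y = PPi X := by
  ext μ
  constructor
  · rintro ⟨ν, ⟨νi, hν⟩, rfl⟩
    exact ⟨_, prob_box_push_piMap g hν⟩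
  · rintro ⟨μi, hμ⟩
    have : ∀ i, Nonempty (X i) := fun i => (μi i).nonempty
    have hgi := hg.of_piMap
    refine ⟨prodPM fun i => push (Function.surjInv (hgi i)) (μi i), prodPM_mem_PPi _,
      PM.ext_box fun U => ?_⟩
    rw [prob_box_push_piMap g (prodPM_prob_box _), hμ]
    refine Finset.prod_congr rfl fun i _ => ?_
    rw [push_prob, push_prob, ← Set.preimage_comp,
      (Function.rightInverse_surjInv (hgi i)).comp_eq_id, Set.preimage_id]

end ProductMeasures

lemma IsProdEmb.exists_preimage_piMap {n : ℕ} {X Y : Fin n → Type} [∀ i, Fintype (X i)]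
    {e : Emb (∀ i, X i) (∀ i, Y i)} (he : IsProdEmb e) :
    ∃ g : ∀ i, Y i → X i, ∀ S, e.f S = Pi.map g ⁻¹' S := by
  obtain ⟨ei, hei⟩ := he
  choose g hg using fun i => (ei i).exists_preimage_eq
  refine ⟨g, fun S => ?_⟩
  ext y
  simp only [hei, hg, Set.mem_iUnion, Set.mem_preimage, Set.mem_singleton_iff, exists_prop]
  exact ⟨fun ⟨x, hx, hy⟩ => (funext hy : Pi.map g y = x) ▸ hx, fun h => ⟨_, h, fun _ => rfl⟩⟩

section Permutations

variable {n : ℕ} {X : Fin n → Type} (π : Equiv.Perm (Fin n))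

variable (X) in
/-- `x ↦ x ∘ π` -/
def permuteEquiv : (∀ j, X j) ≃ ∀ i, X (π i) :=
  Equiv.piCongrLeft' X π.symm

lemma permuteEquiv_preimage_box (U : ∀ j, Set (X j)) :
    permuteEquiv X π ⁻¹' {y | ∀ i, y i ∈ U (π i)} = {x | ∀ j, x j ∈ U j} := by
  ext x
  exact π.forall_congr_right (q := fun j => x j ∈ U j)

lemma exists_comp_perm_eq {F : Fin n → Type*} (v : ∀ i, F (π i)) :
    ∃ w : ∀ j, F j, ∀ i, w (π i) = v i :=
  ⟨Equiv.piCongrLeft F π v, Equiv.piCongrLeft_apply_apply F π v⟩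

variable [∀ i, Fintype (X i)]

lemma isProdPM_push_permuteEquiv {μ : PM (∀ j, X j)} (hμ : IsProdPM μ) :
    IsProdPM (push (permuteEquiv X π) μ) := by
  obtain ⟨μj, hμ⟩ := hμ
  refine ⟨fun i => μj (π i), fun V => ?_⟩
  obtain ⟨W, hW⟩ := exists_comp_perm_eq π (F := fun j => Set (X j)) V
  obtain rfl : V = fun i => W (π i) := funext fun i => (hW i).symm
  rw [push_prob, permuteEquiv_preimage_box, hμ, ← Equiv.prod_comp π]

lemma isProdPM_push_permuteEquiv_symm {ν : PM (∀ i, X (π i))} (hν : IsProdPM ν) :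
    IsProdPM (push (permuteEquiv X π).symm ν) := by
  obtain ⟨νi, hν⟩ := hν
  obtain ⟨w, hw⟩ := exists_comp_perm_eq π (F := fun j => PM (X j)) νi
  refine ⟨w, fun U => ?_⟩
  rw [push_prob, ← permuteEquiv_preimage_box, Equiv.symm_preimage_preimage, hν,
    ← Equiv.prod_comp π fun j => (w j).prob (U j)]
  simp only [hw]

lemma image_push_permuteEquiv_symm_PPi :
    push (permuteEquiv X π).symm '' PPi (fun i => X (π i)) = PPi X := by
  refine Set.Subset.antisymm (Set.image_subset_iff.mpr fun ν hν =>
    isProdPM_push_permuteEquiv_symm π hν) fun μ hμ =>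
      ⟨_, isProdPM_push_permuteEquiv π hμ, ext_prob fun S => ?_⟩
  rw [push_prob, push_prob, Equiv.preimage_symm_preimage]

end Permutations

/-- the relative-entropy inference procedure based on product
priors is invariant (1) under faithful product embeddings and (2) under
permutation embeddings. -/
theorem stmt19 {n : ℕ} (X : Fin n → Type) [∀ i, Fintype (X i)] :
    (∀ (Y : Fin n → Type) [∀ i, Fintype (Y i)]
        (e : Emb (∀ i, X i) (∀ i, Y i)), e.Faithful → IsProdEmb e →
      SetCorr e (PPi X) (PPi Y) ∧
      ∀ KB θ : Set (PM (∀ i, X i)),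
        (DProj (PPi X) KB ⊆ θ ↔ DProj (PPi Y) (fstar e KB) ⊆ fstar e θ)) ∧
    (∀ (π : Equiv.Perm (Fin n)) (e : Emb (∀ i, X i) (∀ i, X (π i))),
      (∀ S : Set (∀ i, X i), e.f S = (fun x : ∀ i, X i => fun i => x (π i)) '' S) →
      SetCorr e (PPi X) (PPi (fun i => X (π i))) ∧
      ∀ KB θ : Set (PM (∀ i, X i)),
        (DProj (PPi X) KB ⊆ θ ↔
          DProj (PPi (fun i => X (π i))) (fstar e KB) ⊆ fstar e θ)) := by
  refine ⟨fun Y _ e hfaith hprod => ?_, fun π e he => ?_⟩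
  · obtain ⟨g, hg⟩ := hprod.exists_preimage_piMap
    exact setCorr_and_DProj_subset_iff hg (image_push_piMap_PPi g (hfaith.surjective hg))
  · have hg (S : Set (∀ i, X i)) : e.f S = (permuteEquiv X π).symm ⁻¹' S :=
      (he S).trans ((permuteEquiv X π).image_eq_preimage_symm S)
    exact setCorr_and_DProj_subset_iff hg (image_push_permuteEquiv_symm_PPi π)
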